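/- arXiv:1611.01032 — 4 statements merged into one kernel-verified Lean document; each statement's English description precedes it below -/
import Mathlib

section
/- Let B ≤ B̄ be reals, let η^r > 0 and η^e > 0, and let P⁻ ≥ 0 and C ≥ 0. Define r* = min{ P⁻, (B̄ − B)/η^r } and u* = min{ C, (B̄ − B − η^r·r*)/η^e }. Then: (i) 0 ≤ r* ≤ P⁻, 0 ≤ u* ≤ C, and B + η^r·r* + η^e·u* ≤ B̄; (ii) B + η^r·r* + η^e·u* = min{ B̄, B + η^r·P⁻ + η^e·C }; (iii) for every pair (r, u) with 0 ≤ r ≤ P⁻, 0 ≤ u ≤ C and B + η^r·r + η^e·u ≤ B̄, one has B + η^r·r + η^e·u ≤ B + η^r·r* + η^e·u*. -/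
/-- CS mode: the closed-form choices
`r* = min{P⁻, (B̄ − B)/ηʳ}` and `u* = min{C, (B̄ − B − ηʳ·r*)/ηᵉ}`
are feasible, charge the battery to `min{B̄, B + ηʳ·P⁻ + ηᵉ·C}`,
and maximize the updated SoC among all feasible pairs `(r, u)`. -/
theorem cs_mode_closed_form (Bhi B ηr ηe Pm C : ℝ)
    (hB : B ≤ Bhi) (hηr : 0 < ηr) (hηe : 0 < ηe) (hPm : 0 ≤ Pm) (hC : 0 ≤ C) :
    (0 ≤ min Pm ((Bhi - B) / ηr) ∧ min Pm ((Bhi - B) / ηr) ≤ Pm ∧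
     0 ≤ min C ((Bhi - B - ηr * min Pm ((Bhi - B) / ηr)) / ηe) ∧
     min C ((Bhi - B - ηr * min Pm ((Bhi - B) / ηr)) / ηe) ≤ C ∧
     B + ηr * min Pm ((Bhi - B) / ηr)
       + ηe * min C ((Bhi - B - ηr * min Pm ((Bhi - B) / ηr)) / ηe) ≤ Bhi) ∧
    (B + ηr * min Pm ((Bhi - B) / ηr)
       + ηe * min C ((Bhi - B - ηr * min Pm ((Bhi - B) / ηr)) / ηe)
     = min Bhi (B + ηr * Pm + ηe * C)) ∧
    (∀ r u : ℝ, 0 ≤ r → r ≤ Pm → 0 ≤ u → u ≤ C → B + ηr * r + ηe * u ≤ Bhi →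
      B + ηr * r + ηe * u ≤
        B + ηr * min Pm ((Bhi - B) / ηr)
          + ηe * min C ((Bhi - B - ηr * min Pm ((Bhi - B) / ηr)) / ηe)) := by
  have hd : 0 ≤ Bhi - B := by linarith
  set r := min Pm ((Bhi - B) / ηr) with hrdef
  have hr0 : 0 ≤ r := le_min hPm (div_nonneg hd hηr.le)
  have hrP : r ≤ Pm := min_le_left _ _
  have hrd : ηr * r ≤ Bhi - B := by
    have h := min_le_right Pm ((Bhi - B) / ηr)
    have : ηr * r ≤ ηr * ((Bhi - B) / ηr) := by nlinarith
    calc ηr * r ≤ ηr * ((Bhi - B) / ηr) := this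
      _ = Bhi - B := by field_simp
  set u := min C ((Bhi - B - ηr * r) / ηe) with hudef
  have hu0 : 0 ≤ u := le_min hC (div_nonneg (by linarith) hηe.le)
  have huC : u ≤ C := min_le_left _ _
  have hud : ηe * u ≤ Bhi - B - ηr * r := by
    have h := min_le_right C ((Bhi - B - ηr * r) / ηe)
    have : ηe * u ≤ ηe * ((Bhi - B - ηr * r) / ηe) := by nlinarith
    calc ηe * u ≤ ηe * ((Bhi - B - ηr * r) / ηe) := this
      _ = Bhi - B - ηr * r := by field_simp
  have heq : B + ηr * r + ηe * u = min Bhi (B + ηr * Pm + ηe * C) := by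
    rcases le_total ((Bhi - B) / ηr) Pm with h | h
    · have hrval : r = (Bhi - B) / ηr := min_eq_right h
      have hrr : ηr * r = Bhi - B := by rw [hrval]; field_simp
      have huval : u = 0 := by
        rw [hudef, hrr]
        simp [hC]
      have hPmd : Bhi - B ≤ ηr * Pm := by
        have := mul_le_mul_of_nonneg_left h hηr.le
        calc Bhi - B = ηr * ((Bhi - B) / ηr) := by field_simp
          _ ≤ ηr * Pm := this
      have hle : Bhi ≤ B + ηr * Pm + ηe * C := by nlinarith
      rw [hrr, huval, min_eq_left hle]; ring
    · have hrval : r = Pm := min_eq_left h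
      have hPd : ηr * Pm ≤ Bhi - B := by rw [← hrval]; exact hrd
      rcases le_total C ((Bhi - B - ηr * r) / ηe) with h2 | h2
      · have huval : u = C := min_eq_left h2
        have hle : B + ηr * Pm + ηe * C ≤ Bhi := by
          rw [← hrval]
          have : ηe * C ≤ ηe * ((Bhi - B - ηr * r) / ηe) := by nlinarith
          have h3 : ηe * ((Bhi - B - ηr * r) / ηe) = Bhi - B - ηr * r := by field_simp
          linarith
        rw [hrval, huval, min_eq_right hle]
      · have huval : u = (Bhi - B - ηr * r) / ηe := min_eq_right h2
        have huu : ηe * u = Bhi - B - ηr * r := by rw [huval]; field_simp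
        have hle : Bhi ≤ B + ηr * Pm + ηe * C := by
          have : ηe * ((Bhi - B - ηr * r) / ηe) ≤ ηe * C := by nlinarith
          have h3 : ηe * ((Bhi - B - ηr * r) / ηe) = Bhi - B - ηr * r := by field_simp
          rw [← hrval]; linarith
        rw [min_eq_left hle, huu, hrval]; ring
  refine ⟨⟨hr0, hrP, hu0, huC, by linarith⟩, heq, ?_⟩
  intro r' u' h1 h2 h3 h4 h5
  rw [heq]
  have : B + ηr * r' + ηe * u' ≤ B + ηr * Pm + ηe * C := by nlinarith
  exact le_min h5 this
end

section
/- Let f_min, f_max, η^d_min be positive reals, let 0 < η^e_min ≤ η^e_max, and let κ ≥ 1. Define θ^cs = √( f_max·f_min / (κ·η^d_min·η^e_max) ) and θ^ap = θ^cs·η^d_min·η^e_min. Then max{ θ^cs·κ·η^e_max/(f_min·η^e_min), θ^ap/(f_min·η^d_min·η^e_min), f_max / min{θ^cs·η^d_min·η^e_min, θ^ap} } = √( κ·f_max·η^e_max / (f_min·η^d_min) ) · (1/η^e_min). -/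
/-!
The threshold θ^cs is the balancing point θ² · κ·η^d_min·η^e_max = f_max·f_min, at which the
EV-mode bound θκη^e_max/(f_min η^e_min) and the CS-mode bound f_max/(θ η^d_min η^e_min) coincide,
and their common value is the claimed ratio. Since θ^ap = θ^cs η^d_min η^e_min, the AP-mode bound
is θ^cs/f_min, which is smaller because η^e_min ≤ η^e_max ≤ κ η^e_max.
-/

section Balance

variable {θ fmin fmax ηdmin ηemin ηemax κ : ℝ}

theorem fmax_div_eq_of_balance (hθ : 0 < θ) (hfmin : 0 < fmin) (hηdmin : 0 < ηdmin)
    (hηemin : 0 < ηemin) (hbal : θ ^ 2 * (κ * ηdmin * ηemax) = fmax * fmin) :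
    fmax / (θ * ηdmin * ηemin) = θ * κ * ηemax / (fmin * ηemin) := by
  rw [div_eq_div_iff (by positivity) (by positivity)]
  linear_combination (-ηemin) * hbal

theorem sqrt_ratio_eq_of_balance (hθ : 0 ≤ θ) (hfmin : 0 < fmin) (hηdmin : 0 < ηdmin)
    (hκ : 0 ≤ κ) (hηemax : 0 ≤ ηemax) (hbal : θ ^ 2 * (κ * ηdmin * ηemax) = fmax * fmin) :
    √(κ * fmax * ηemax / (fmin * ηdmin)) = θ * κ * ηemax / fmin := by
  have hsq : κ * fmax * ηemax / (fmin * ηdmin) = (θ * κ * ηemax / fmin) ^ 2 := by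
    rw [div_eq_iff (by positivity), div_pow, div_mul_eq_mul_div, eq_div_iff (by positivity)]
    linear_combination (-κ * ηemax * fmin) * hbal
  rw [hsq, Real.sqrt_sq (by positivity)]

end Balance

/-- With the thresholds chosen in Theorem 2, the maximum of the three per-slot
ratio bounds equals √(κ·f_max·η^e_max/(f_min·η^d_min))·(1/η^e_min). -/
theorem competitive_ratio_value (fmin fmax ηdmin ηemin ηemax κ : ℝ)
    (hfmin : 0 < fmin) (hfmax : 0 < fmax) (hηdmin : 0 < ηdmin)
    (hηemin : 0 < ηemin) (hηe : ηemin ≤ ηemax) (hκ : 1 ≤ κ) :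
    let θcs := Real.sqrt (fmax * fmin / (κ * ηdmin * ηemax))
    let θap := θcs * ηdmin * ηemin
    max (θcs * κ * ηemax / (fmin * ηemin))
      (max (θap / (fmin * ηdmin * ηemin))
        (fmax / min (θcs * ηdmin * ηemin) θap)) =
      Real.sqrt (κ * fmax * ηemax / (fmin * ηdmin)) * (1 / ηemin) := by
  intro θcs θap
  have hηemax : 0 < ηemax := hηemin.trans_le hηe
  have hκ0 : 0 < κ := one_pos.trans_le hκ
  have hθcs : 0 < θcs := Real.sqrt_pos.mpr (by positivity)
  have hbal : θcs ^ 2 * (κ * ηdmin * ηemax) = fmax * fmin := by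
    rw [Real.sq_sqrt (by positivity)]
    field_simp
  have hap : θap / (fmin * ηdmin * ηemin) ≤ θcs * κ * ηemax / (fmin * ηemin) := by
    have hηe_le : ηemin ≤ κ * ηemax := hηe.trans (le_mul_of_one_le_left hηemax.le hκ)
    calc θap / (fmin * ηdmin * ηemin) = θcs * ηemin / (fmin * ηemin) := by
          simp only [θap]; field_simp
      _ ≤ θcs * (κ * ηemax) / (fmin * ηemin) := by gcongr
      _ = θcs * κ * ηemax / (fmin * ηemin) := by ring
  rw [min_self, fmax_div_eq_of_balance hθcs hfmin hηdmin hηemin hbal, max_eq_right hap, max_self,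
    sqrt_ratio_eq_of_balance hθcs.le hfmin hηdmin hκ0.le hηemax.le hbal]
  field_simp
end

section
/- Let Ḡ > 0, 0 ≤ g ≤ Ḡ, 0 ≤ w ≤ Ḡ, 0 ≤ w' ≤ Ḡ, and let g_u, g_v ≥ 0 be fuel prices with g_v ≤ g_u. Over the nonempty feasible set F = { (x, y) ∈ ℝ² : x ≥ 0, y ≥ 0, g + x ≤ Ḡ, g + x − w ≥ 0, g + x − w + y ≤ Ḡ, g + x − w + y − w' ≥ 0 }, there exists a minimizer (x*, y*) of the cost g_u·x + g_v·y with x* = max{ w − g, 0 }; in particular, the fuel level upon reaching v equals max{ g − w, 0 }, which is 0 whenever g ≤ w. -/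
/-- Lemma 1, first case: if the fuel price at the next stop `v` is no larger
than at `u`, then it is optimal to refill at `u` just enough to reach `v`; the
fuel level upon reaching `v` is `max{g − w, 0}`, which is `0` whenever `g ≤ w`. -/
theorem cheaper_next_stop_refill_just_enough (G g w w' gu gv : ℝ)
    (hG : 0 < G) (hg0 : 0 ≤ g) (hgG : g ≤ G)
    (hw0 : 0 ≤ w) (hwG : w ≤ G) (hw'0 : 0 ≤ w') (hw'G : w' ≤ G)
    (hgu : 0 ≤ gu) (hgv : 0 ≤ gv) (hvu : gv ≤ gu) :
    ∃ p : ℝ × ℝ,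
      (0 ≤ p.1 ∧ 0 ≤ p.2 ∧ g + p.1 ≤ G ∧ 0 ≤ g + p.1 - w ∧
        g + p.1 - w + p.2 ≤ G ∧ 0 ≤ g + p.1 - w + p.2 - w') ∧
      (∀ q : ℝ × ℝ,
        (0 ≤ q.1 ∧ 0 ≤ q.2 ∧ g + q.1 ≤ G ∧ 0 ≤ g + q.1 - w ∧
          g + q.1 - w + q.2 ≤ G ∧ 0 ≤ g + q.1 - w + q.2 - w') →
        gu * p.1 + gv * p.2 ≤ gu * q.1 + gv * q.2) ∧
      p.1 = max (w - g) 0 ∧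
      g + p.1 - w = max (g - w) 0 ∧
      (g ≤ w → g + p.1 - w = 0) := by
  rcases le_total g w with h | h
  · refine ⟨(w - g, w'),
      ⟨show (0:ℝ) ≤ w - g by linarith, show (0:ℝ) ≤ w' by linarith,
       show g + (w - g) ≤ G by linarith, show (0:ℝ) ≤ g + (w - g) - w by linarith,
       show g + (w - g) - w + w' ≤ G by linarith,
       show (0:ℝ) ≤ g + (w - g) - w + w' - w' by linarith⟩, ?_, ?_, ?_, ?_⟩
    · rintro ⟨x, y⟩ ⟨hx0, hy0, h1, h2, h3, h4⟩
      simp only at *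
      nlinarith [mul_nonneg (sub_nonneg.2 hvu) (by linarith : (0:ℝ) ≤ x - (w - g)),
        mul_nonneg hgv (by linarith : (0:ℝ) ≤ x + y - (w - g) - w')]
    · show w - g = max (w - g) 0
      rw [max_eq_left (by linarith)]
    · show g + (w - g) - w = max (g - w) 0
      rw [max_eq_right (by linarith)]; ring
    · intro _; show g + (w - g) - w = 0; ring
  · refine ⟨(0, max (w' - (g - w)) 0),
      ⟨le_rfl, le_max_right _ _, show g + 0 ≤ G by linarith,
       show (0:ℝ) ≤ g + 0 - w by linarith, ?_, ?_⟩,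
      ?_, ?_, ?_, ?_⟩
    · show g + 0 - w + max (w' - (g - w)) 0 ≤ G
      rcases max_cases (w' - (g - w)) 0 with ⟨he, _⟩ | ⟨he, _⟩ <;> rw [he] <;> linarith
    · show 0 ≤ g + 0 - w + max (w' - (g - w)) 0 - w'
      rcases max_cases (w' - (g - w)) 0 with ⟨he, h2⟩ | ⟨he, h2⟩ <;> rw [he] <;> linarith
    · rintro ⟨x, y⟩ ⟨hx0, hy0, h1, h2, h3, h4⟩
      simp only at *
      rcases max_cases (w' - (g - w)) 0 with ⟨he, _⟩ | ⟨he, _⟩ <;> rw [he] <;>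
        nlinarith [mul_nonneg (sub_nonneg.2 hvu) hx0,
          mul_nonneg hgv (by linarith : (0:ℝ) ≤ x + y - (w' - (g - w))),
          mul_nonneg hgv (by linarith : (0:ℝ) ≤ x + y)]
    · show (0:ℝ) = max (w - g) 0
      rw [max_eq_right (by linarith)]
    · show g + 0 - w = max (g - w) 0
      rw [max_eq_left (by linarith)]; ring
    · intro h'
      have : g = w := le_antisymm h' h
      show g + 0 - w = 0
      rw [this]; ring
end

section
/- Let Ḡ > 0, 0 ≤ g ≤ Ḡ, 0 ≤ w ≤ Ḡ, 0 ≤ w' ≤ Ḡ, and let g_u, g_v ≥ 0 be fuel prices with g_v > g_u. Let (x, y) minimize the cost g_u·x + g_v·y over the feasible set F = { (x, y) ∈ ℝ² : x ≥ 0, y ≥ 0, g + x ≤ Ḡ, g + x − w ≥ 0, g + x − w + y ≤ Ḡ, g + x − w + y − w' ≥ 0 }. If y > 0, then g + x = Ḡ; in particular, the fuel level upon reaching v equals Ḡ − w. -/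
/-- Lemma 1, second case: if the fuel price at the next stop `v` is strictly
larger than at `u` and the optimal solution refills at `v`, then the tank must
be filled up completely at `u`, so the fuel level upon reaching `v` is `Ḡ − w`. -/
theorem pricier_next_stop_fill_up (G g w w' gu gv : ℝ) (x y : ℝ)
    (hG : 0 < G) (hg0 : 0 ≤ g) (hgG : g ≤ G)
    (hw0 : 0 ≤ w) (hwG : w ≤ G) (hw'0 : 0 ≤ w') (hw'G : w' ≤ G)
    (hgu : 0 ≤ gu) (hgv : 0 ≤ gv) (hvu : gu < gv)
    (hfeas : 0 ≤ x ∧ 0 ≤ y ∧ g + x ≤ G ∧ 0 ≤ g + x - w ∧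
      g + x - w + y ≤ G ∧ 0 ≤ g + x - w + y - w')
    (hmin : ∀ q : ℝ × ℝ,
      (0 ≤ q.1 ∧ 0 ≤ q.2 ∧ g + q.1 ≤ G ∧ 0 ≤ g + q.1 - w ∧
        g + q.1 - w + q.2 ≤ G ∧ 0 ≤ g + q.1 - w + q.2 - w') →
      gu * x + gv * y ≤ gu * q.1 + gv * q.2)
    (hy : 0 < y) :
    g + x = G ∧ g + x - w = G - w := by
  obtain ⟨hx0, hy0, hxG, hxw, hxyG, hxyw⟩ := hfeas
  suffices h : g + x = G by exact ⟨h, by linarith⟩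
  by_contra hne
  have hlt : g + x < G := lt_of_le_of_ne hxG hne
  set ε := min (G - (g + x)) y with hε
  have hεpos : 0 < ε := lt_min (by linarith) hy
  have hε1 : ε ≤ G - (g + x) := min_le_left _ _
  have hε2 : ε ≤ y := min_le_right _ _
  have := hmin (x + ε, y - ε) ⟨by simp; linarith, by simp; linarith,
    by simp; linarith, by simp; linarith, by simp; linarith, by simp; linarith⟩
  simp only at this
  nlinarith [mul_pos (sub_pos.mpr hvu) hεpos]
end
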